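/- The sum $(F,Y)\mapsto \tfrac{\alpha}{2}K_0\operatorname{tr}(F Y^{-1/2} F^\top) + \tfrac{e_R}{2}\|Y\|^2$ with constants $\alpha, K_0, e_R > 0$ is strictly convex on $\mathbb{R}^{3\times3}\times\mathcal{S}^3_{>0}$, where $\|\cdot\|$ is the Frobenius norm. -/

import Mathlib

open Matrix Set

open scoped Classical in
/-- The inverse of the unique symmetric positive-semidefinite square root of `Y`
(junk value `0` when `Y` is not positive semidefinite). -/
noncomputable def invSqrt (Y : Matrix (Fin 3) (Fin 3) ℝ) : Matrix (Fin 3) (Fin 3) ℝ :=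
  if h : Y.PosSemidef then (h.1.eigenvectorUnitary.1 * diagonal ((↑) ∘ (√·) ∘ h.1.eigenvalues) *
    (star h.1.eigenvectorUnitary : Matrix (Fin 3) (Fin 3) ℝ))⁻¹ else 0

/-!
The matrix-fractional function `(F, A) ↦ tr(F A⁻¹ Fᵀ)` is the supremum over `W` of the functions
`2 tr(F Wᵀ) - tr(W A Wᵀ)`, which are affine in `(F, A)` and antitone in `A` for the Loewner order.
Hence it is jointly convex and antitone in `A`. The matrix square root is operator concave
(from its operator monotonicity, since `(a S₁ + b S₂)² ≤ a S₁² + b S₂²`), so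
`(F, Y) ↦ tr(F Y^{-1/2} Fᵀ)` is jointly convex. Strictness: if the two points differ in `Y`, the
squared Frobenius norm is strictly convex in `Y`; if they agree in `Y`, the first term is a
positive definite quadratic form in `F`.
-/

open scoped MatrixOrder

namespace Matrix

variable {m n : Type*}

lemma convex_setOf_posDef : Convex ℝ {A : Matrix n n ℝ | A.PosDef} :=
  convex_iff_forall_pos.2 fun _ hA _ hB _ _ ha hb _ => (hA.smul ha).add (hB.smul hb)

variable [Fintype n]

lemma mul_mul_transpose_apply_self (G : Matrix m n ℝ) (A : Matrix n n ℝ) (i : m) :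
    (G * A * Gᵀ) i i = G i ⬝ᵥ A *ᵥ G i := by
  simp only [mul_apply, transpose_apply, dotProduct, mulVec, Finset.sum_mul, Finset.mul_sum]
  rw [Finset.sum_comm]
  exact Finset.sum_congr rfl fun _ _ => Finset.sum_congr rfl fun _ _ => by ring

section Trace

variable [Fintype m]

lemma PosSemidef.trace_mul_mul_transpose_nonneg {A : Matrix n n ℝ} (hA : A.PosSemidef)
    (G : Matrix m n ℝ) : 0 ≤ (G * A * Gᵀ).trace :=
  Finset.sum_nonneg fun i _ => by
    simpa [mul_mul_transpose_apply_self] using hA.dotProduct_mulVec_nonneg (G i)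

lemma PosDef.trace_mul_mul_transpose_pos {A : Matrix n n ℝ} (hA : A.PosDef)
    {G : Matrix m n ℝ} (hG : G ≠ 0) : 0 < (G * A * Gᵀ).trace := by
  obtain ⟨i, hi⟩ := Function.ne_iff.1 hG
  refine Finset.sum_pos' (fun j _ => ?_) ⟨i, Finset.mem_univ i, ?_⟩
  · simpa [mul_mul_transpose_apply_self] using hA.posSemidef.dotProduct_mulVec_nonneg (G j)
  · simpa [mul_mul_transpose_apply_self] using hA.dotProduct_mulVec_pos hi

lemma trace_mul_mul_transpose_smul_add_smul {A : Matrix n n ℝ} (hA : Aᵀ = A)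
    (F₁ F₂ : Matrix m n ℝ) {a b : ℝ} (hab : a + b = 1) :
    ((a • F₁ + b • F₂) * A * (a • F₁ + b • F₂)ᵀ).trace
      = a * (F₁ * A * F₁ᵀ).trace + b * (F₂ * A * F₂ᵀ).trace
        - a * b * ((F₁ - F₂) * A * (F₁ - F₂)ᵀ).trace := by
  have hsymm : (F₂ * A * F₁ᵀ).trace = (F₁ * A * F₂ᵀ).trace := by
    rw [← trace_transpose, transpose_mul, transpose_mul, transpose_transpose, hA, Matrix.mul_assoc]
  obtain rfl : b = 1 - a := by linarith
  simp only [Matrix.add_mul, Matrix.mul_add, Matrix.sub_mul, Matrix.mul_sub, transpose_add,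
    transpose_sub, transpose_smul, Matrix.smul_mul, Matrix.mul_smul, trace_add, trace_sub,
    trace_smul, smul_eq_mul, hsymm]
  ring

lemma PosDef.strictConvexOn_trace_mul_mul_transpose {A : Matrix n n ℝ} (hA : A.PosDef) :
    StrictConvexOn ℝ univ fun F : Matrix m n ℝ => (F * A * Fᵀ).trace := by
  refine ⟨convex_univ, fun F₁ _ F₂ _ hF a b ha hb hab => ?_⟩
  have hpos := hA.trace_mul_mul_transpose_pos (sub_ne_zero.2 hF)
  have hsymm : Aᵀ = A := by simpa using hA.1.eq
  simp only [trace_mul_mul_transpose_smul_add_smul hsymm F₁ F₂ hab, smul_eq_mul]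
  nlinarith [mul_pos (mul_pos ha hb) hpos]

lemma strictConvexOn_sum_sq [DecidableEq n] :
    StrictConvexOn ℝ univ fun Y : Matrix m n ℝ => ∑ i, ∑ j, Y i j ^ 2 := by
  convert (PosDef.one (n := n) (R := ℝ)).strictConvexOn_trace_mul_mul_transpose (m := m)
    using 2 with Y
  simp [trace, mul_apply, sq]

end Trace

variable [DecidableEq n]

lemma le_of_mul_self_le_mul_self {S T : Matrix n n ℝ} (hS : 0 ≤ S) (hT : 0 ≤ T)
    (h : S * S ≤ T * T) : S ≤ T := by
  rw [nonneg_iff_posSemidef] at hS hT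
  rw [le_iff] at h ⊢
  have hD : (T - S).IsHermitian := hT.1.sub hS.1
  refine hD.posSemidef_iff_eigenvalues_nonneg.2 fun i => not_lt.1 fun hμ => ?_
  set μ := hD.eigenvalues i
  rw [Pi.zero_apply] at hμ
  set v : n → ℝ := ⇑(hD.eigenvectorBasis i)
  have hv : (T - S) *ᵥ v = μ • v := hD.mulVec_eigenvectorBasis i
  have hv₀ : v ≠ 0 := fun h₀ =>
    hD.eigenvectorBasis.orthonormal.ne_zero i ((WithLp.ofLp_eq_zero 2).1 h₀)
  have hvD : v ᵥ* (T - S) = μ • v := by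
    rw [← mulVec_transpose, show (T - S)ᵀ = T - S by simpa using hD.eq, hv]
  -- On an eigenvector with eigenvalue `μ < 0`, `0 ≤ vᵀ(T² - S²)v = μ (vᵀTv + vᵀSv)` forces
  -- `Tv = Sv = 0`, contradicting `(T - S) v = μ v ≠ 0`.
  have hquad : v ⬝ᵥ (T * T - S * S) *ᵥ v = μ * (v ⬝ᵥ T *ᵥ v + v ⬝ᵥ S *ᵥ v) := by
    rw [show T * T - S * S = T * (T - S) + (T - S) * S by noncomm_ring, add_mulVec,
      ← mulVec_mulVec, ← mulVec_mulVec, dotProduct_add, hv, mulVec_smul, dotProduct_smul,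
      dotProduct_mulVec v (T - S), hvD, smul_dotProduct, smul_eq_mul, smul_eq_mul]
    ring
  have hTv := hT.dotProduct_mulVec_nonneg v
  have hSv := hS.dotProduct_mulVec_nonneg v
  have hh := h.dotProduct_mulVec_nonneg v
  simp only [star_trivial] at hTv hSv hh
  rw [hquad] at hh
  have hsum := nonpos_of_mul_nonneg_right hh hμ
  have hTv₀ : T *ᵥ v = 0 := (hT.dotProduct_mulVec_zero_iff v).1 (by simp; linarith)
  have hSv₀ : S *ᵥ v = 0 := (hS.dotProduct_mulVec_zero_iff v).1 (by simp; linarith)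
  rw [sub_mulVec, hTv₀, hSv₀, sub_zero, eq_comm, smul_eq_zero] at hv
  exact hv.elim hμ.ne hv₀

lemma concaveOn_sqrt : ConcaveOn ℝ (Ici (0 : Matrix n n ℝ)) CFC.sqrt := by
  refine ⟨convex_Ici 0, fun Y₁ hY₁ Y₂ hY₂ a b ha hb hab => ?_⟩
  have hS₁ := CFC.sqrt_nonneg Y₁
  have hS₂ := CFC.sqrt_nonneg Y₂
  set S₁ := CFC.sqrt Y₁
  set S₂ := CFC.sqrt Y₂
  refine le_of_mul_self_le_mul_self (by positivity) (CFC.sqrt_nonneg _) ?_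
  rw [CFC.sqrt_mul_sqrt_self _ (by simp only [mem_Ici] at *; positivity), ← sub_nonneg,
    ← CFC.sqrt_mul_sqrt_self Y₁, ← CFC.sqrt_mul_sqrt_self Y₂]
  have hS : IsSelfAdjoint (S₁ - S₂) := hS₁.isSelfAdjoint.sub hS₂.isSelfAdjoint
  have hsq : 0 ≤ (S₁ - S₂) * (S₁ - S₂) := by
    simpa [hS.star_eq] using star_mul_self_nonneg (S₁ - S₂)
  convert smul_nonneg (mul_nonneg ha hb) hsq using 1
  obtain rfl : b = 1 - a := by linarith
  simp only [Matrix.add_mul, Matrix.mul_add, Matrix.sub_mul, Matrix.mul_sub, Matrix.smul_mul,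
    Matrix.mul_smul]
  module

lemma PosDef.posDef_sqrt {A : Matrix n n ℝ} (hA : A.PosDef) : (CFC.sqrt A).PosDef :=
  hA.isStrictlyPositive.sqrt.posDef

variable [Fintype m]

lemma PosDef.isGreatest_trace_mul_inv_mul_transpose {A : Matrix n n ℝ} (hA : A.PosDef)
    (F : Matrix m n ℝ) :
    IsGreatest (range fun W : Matrix m n ℝ => 2 * (F * Wᵀ).trace - (W * A * Wᵀ).trace)
      (F * A⁻¹ * Fᵀ).trace := by
  have hAinv : (A⁻¹)ᵀ = A⁻¹ := by
    rw [transpose_nonsing_inv]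
    simpa using congrArg (·⁻¹) hA.1.eq
  have hunit : IsUnit A.det := hA.isUnit.map detMonoidHom
  -- completing the square around the maximiser `W = F A⁻¹`
  have expand (W : Matrix m n ℝ) : ((F * A⁻¹ - W) * A * (F * A⁻¹ - W)ᵀ).trace
      = (F * A⁻¹ * Fᵀ).trace - (2 * (F * Wᵀ).trace - (W * A * Wᵀ).trace) := by
    have hWF : (W * Fᵀ).trace = (F * Wᵀ).trace := by
      rw [← trace_transpose, transpose_mul, transpose_transpose]
    have hWAA : W * A * (A⁻¹ * Fᵀ) = W * Fᵀ := by
      rw [Matrix.mul_assoc, ← Matrix.mul_assoc A, mul_nonsing_inv _ hunit, Matrix.one_mul]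
    rw [Matrix.sub_mul, Matrix.mul_assoc F, nonsing_inv_mul _ hunit, Matrix.mul_one,
      transpose_sub, transpose_mul, hAinv, Matrix.sub_mul, Matrix.mul_sub, Matrix.mul_sub, hWAA]
    simp only [trace_sub, hWF, ← Matrix.mul_assoc]
    ring
  refine ⟨⟨F * A⁻¹, ?_⟩, ?_⟩
  · have := expand (F * A⁻¹)
    simp only [sub_self, Matrix.zero_mul, trace_zero] at this
    linarith
  · rintro _ ⟨W, rfl⟩
    have := hA.posSemidef.trace_mul_mul_transpose_nonneg (F * A⁻¹ - W)
    linarith [expand W]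

lemma convexOn_trace_mul_inv_mul_transpose :
    ConvexOn ℝ (univ ×ˢ {A : Matrix n n ℝ | A.PosDef})
      fun P : Matrix m n ℝ × Matrix n n ℝ => (P.1 * P.2⁻¹ * P.1ᵀ).trace := by
  refine ⟨convex_univ.prod convex_setOf_posDef, ?_⟩
  rintro ⟨F₁, A₁⟩ ⟨-, hA₁⟩ ⟨F₂, A₂⟩ ⟨-, hA₂⟩ a b ha hb hab
  have hA : (a • A₁ + b • A₂).PosDef := convex_setOf_posDef hA₁ hA₂ ha hb hab
  obtain ⟨⟨W, hW⟩, -⟩ := hA.isGreatest_trace_mul_inv_mul_transpose (a • F₁ + b • F₂)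
  simp only [Prod.smul_mk, Prod.mk_add_mk, smul_eq_mul] at hW ⊢
  calc ((a • F₁ + b • F₂) * (a • A₁ + b • A₂)⁻¹ * (a • F₁ + b • F₂)ᵀ).trace
      = a * (2 * (F₁ * Wᵀ).trace - (W * A₁ * Wᵀ).trace)
        + b * (2 * (F₂ * Wᵀ).trace - (W * A₂ * Wᵀ).trace) := by
        rw [← hW]
        simp only [Matrix.add_mul, Matrix.mul_add, Matrix.smul_mul, Matrix.mul_smul, trace_add,
          trace_smul, smul_eq_mul]
        ring
    _ ≤ a * (F₁ * A₁⁻¹ * F₁ᵀ).trace + b * (F₂ * A₂⁻¹ * F₂ᵀ).trace := by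
        gcongr
        · exact (hA₁.isGreatest_trace_mul_inv_mul_transpose F₁).2 ⟨W, rfl⟩
        · exact (hA₂.isGreatest_trace_mul_inv_mul_transpose F₂).2 ⟨W, rfl⟩

lemma PosDef.trace_mul_inv_mul_transpose_le_of_le {A B : Matrix n n ℝ} (hA : A.PosDef)
    (hAB : A ≤ B) (F : Matrix m n ℝ) : (F * B⁻¹ * Fᵀ).trace ≤ (F * A⁻¹ * Fᵀ).trace := by
  have hB : B.PosDef := by simpa using hA.add_posSemidef (le_iff.1 hAB)
  obtain ⟨⟨W, hW⟩, -⟩ := hB.isGreatest_trace_mul_inv_mul_transpose F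
  have hquad : (W * A * Wᵀ).trace ≤ (W * B * Wᵀ).trace := by
    have := (le_iff.1 hAB).trace_mul_mul_transpose_nonneg W
    rwa [Matrix.mul_sub, Matrix.sub_mul, trace_sub, sub_nonneg] at this
  calc (F * B⁻¹ * Fᵀ).trace = 2 * (F * Wᵀ).trace - (W * B * Wᵀ).trace := hW.symm
    _ ≤ 2 * (F * Wᵀ).trace - (W * A * Wᵀ).trace := by linarith
    _ ≤ (F * A⁻¹ * Fᵀ).trace := (hA.isGreatest_trace_mul_inv_mul_transpose F).2 ⟨W, rfl⟩

lemma convexOn_trace_mul_inv_sqrt_mul_transpose :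
    ConvexOn ℝ (univ ×ˢ {Y : Matrix n n ℝ | Y.PosDef})
      fun P : Matrix m n ℝ × Matrix n n ℝ => (P.1 * (CFC.sqrt P.2)⁻¹ * P.1ᵀ).trace := by
  refine ⟨convex_univ.prod convex_setOf_posDef, ?_⟩
  rintro ⟨F₁, Y₁⟩ ⟨-, hY₁⟩ ⟨F₂, Y₂⟩ ⟨-, hY₂⟩ a b ha hb hab
  have hconc : a • CFC.sqrt Y₁ + b • CFC.sqrt Y₂ ≤ CFC.sqrt (a • Y₁ + b • Y₂) :=
    concaveOn_sqrt.2 hY₁.posSemidef.nonneg hY₂.posSemidef.nonneg ha hb hab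
  calc _ ≤ ((a • F₁ + b • F₂) * (a • CFC.sqrt Y₁ + b • CFC.sqrt Y₂)⁻¹
          * (a • F₁ + b • F₂)ᵀ).trace :=
        (convex_setOf_posDef hY₁.posDef_sqrt hY₂.posDef_sqrt ha hb hab
          ).trace_mul_inv_mul_transpose_le_of_le hconc _
    _ ≤ _ := convexOn_trace_mul_inv_mul_transpose.2 (x := (F₁, CFC.sqrt Y₁))
          (y := (F₂, CFC.sqrt Y₂)) ⟨trivial, hY₁.posDef_sqrt⟩ ⟨trivial, hY₂.posDef_sqrt⟩
          ha hb hab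

end Matrix

section Convexity

variable {E F : Type*} [AddCommGroup E] [Module ℝ E] [AddCommGroup F] [Module ℝ F]

lemma StrictConvexOn.const_mul {s : Set E} {f : E → ℝ} {c : ℝ} (hc : 0 < c)
    (hf : StrictConvexOn ℝ s f) : StrictConvexOn ℝ s fun x => c * f x :=
  ⟨hf.1, fun _ hx _ hy hxy _ _ ha hb hab => by
    simpa only [smul_eq_mul, mul_add, mul_left_comm c] using
      mul_lt_mul_of_pos_left (hf.2 hx hy hxy ha hb hab) hc⟩

lemma ConvexOn.strictConvexOn_add_comp_snd {t : Set F} {f : E × F → ℝ} {g : F → ℝ}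
    (hf : ConvexOn ℝ (univ ×ˢ t) f) (hf_fst : ∀ y ∈ t, StrictConvexOn ℝ univ fun x => f (x, y))
    (hg : StrictConvexOn ℝ t g) : StrictConvexOn ℝ (univ ×ˢ t) fun p => f p + g p.2 := by
  refine ⟨hf.1, ?_⟩
  rintro ⟨x₁, y₁⟩ ⟨-, hy₁⟩ ⟨x₂, y₂⟩ ⟨-, hy₂⟩ hne a b ha hb hab
  simp only [Prod.smul_mk, Prod.mk_add_mk, smul_eq_mul]
  by_cases hy : y₁ = y₂
  · subst hy
    have hx : x₁ ≠ x₂ := fun hx => hne (by rw [hx])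
    have hf' := (hf_fst y₁ hy₁).2 trivial trivial hx ha hb hab
    simp only [smul_eq_mul] at hf'
    rw [Convex.combo_self hab]
    linear_combination hf' - g y₁ * hab
  · have hf' := hf.2 (x := (x₁, y₁)) (y := (x₂, y₂)) ⟨trivial, hy₁⟩ ⟨trivial, hy₂⟩ ha.le hb.le hab
    have hg' := hg.2 hy₁ hy₂ hy ha hb hab
    simp only [Prod.smul_mk, Prod.mk_add_mk, smul_eq_mul] at hf' hg'
    linarith

end Convexity

lemma invSqrt_eq_inv_sqrt {Y : Matrix (Fin 3) (Fin 3) ℝ} (hY : Y.PosSemidef) :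
    invSqrt Y = (CFC.sqrt Y)⁻¹ := by
  rw [invSqrt, dif_pos hY, CFC.sqrt_eq_real_sqrt Y hY.nonneg, cfcₙ_eq_cfc, hY.1.cfc_eq]
  rfl

/-- For constants `α, K₀, e_R > 0`, the map
`(F, Y) ↦ (α/2) K₀ tr(F Y^{-1/2} Fᵀ) + (e_R/2) ‖Y‖²` (squared Frobenius norm)
is strictly convex on `ℝ^{3×3} × 𝒮³₊`. -/
theorem stmt8 (α K₀ eR : ℝ) (hα : 0 < α) (hK : 0 < K₀) (heR : 0 < eR) :
    StrictConvexOn ℝ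
      {P : Matrix (Fin 3) (Fin 3) ℝ × Matrix (Fin 3) (Fin 3) ℝ | P.2.PosDef}
      (fun P => α / 2 * K₀ * (P.1 * invSqrt P.2 * P.1ᵀ).trace
        + eR / 2 * ∑ i, ∑ j, (P.2 i j) ^ 2) := by
  have hc₁ : 0 < α / 2 * K₀ := by positivity
  have hc₂ : 0 < eR / 2 := by positivity
  rw [show {P : Matrix (Fin 3) (Fin 3) ℝ × Matrix (Fin 3) (Fin 3) ℝ | P.2.PosDef}
      = univ ×ˢ {Y | Y.PosDef} by ext; simp]
  refine ConvexOn.strictConvexOn_add_comp_snd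
    (f := fun P => α / 2 * K₀ * (P.1 * invSqrt P.2 * P.1ᵀ).trace)
    (g := fun Y => eR / 2 * ∑ i, ∑ j, Y i j ^ 2) ?_ (fun Y (hY : Y.PosDef) => ?_)
    ((strictConvexOn_sum_sq.subset (subset_univ _) convex_setOf_posDef).const_mul hc₂)
  · refine (convexOn_trace_mul_inv_sqrt_mul_transpose.smul hc₁.le).congr fun P hP => ?_
    simp [invSqrt_eq_inv_sqrt hP.2.posSemidef]
  · simp only [invSqrt_eq_inv_sqrt hY.posSemidef]
    exact hY.posDef_sqrt.inv.strictConvexOn_trace_mul_mul_transpose.const_mul hc₁
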